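/- arXiv:2411.00564 — 8 statements merged into one kernel-verified Lean document; each statement's English description precedes it below -/
import Mathlib

section
/- A choice function C on subsets of a finite set W satisfying path-independence (C(S ∪ T) = C(S ∪ C(T)) for all S, T ⊆ W) also satisfies substitutability: for all S ⊆ W and w ∈ C(S), and any w' ∈ S with w' ≠ w, we have w ∈ C(S \ {w'}). -/
/-- A path-independent choice function on subsets of a finite set `W`
satisfies substitutability. -/
theorem pathIndependent_implies_substitutable
    {W : Type*} [DecidableEq W] [Fintype W]
    (C : Finset W → Finset W)
    (hsub : ∀ S : Finset W, C S ⊆ S)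
    (hpi : ∀ S T : Finset W, C (S ∪ T) = C (C S ∪ T)) :
    ∀ (S : Finset W) (w w' : W), w ∈ C S → w' ∈ S → w' ≠ w →
      w ∈ C (S.erase w') := by
  intro S w w' hw hw' hne
  have hS : S = S.erase w' ∪ {w'} := by
    ext x
    simp only [Finset.mem_union, Finset.mem_erase, Finset.mem_singleton]
    constructor
    · intro hx
      by_cases hxw : x = w'
      · exact Or.inr hxw
      · exact Or.inl ⟨hxw, hx⟩
    · rintro (⟨_, hx⟩ | rfl) <;> [exact hx; exact hw']
  rw [hS, hpi (S.erase w') {w'}] at hw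
  rcases Finset.mem_union.1 (hsub _ hw) with h | h
  · exact h
  · exact absurd (Finset.mem_singleton.1 h).symm hne
end

section
/- A choice function C on subsets of a finite set W that satisfies both substitutability and consistency is path-independent. -/
/-- A choice function satisfying substitutability and consistency
is path-independent. -/
theorem substitutable_consistent_implies_pathIndependent
    {W : Type*} [DecidableEq W] [Fintype W]
    (C : Finset W → Finset W)
    (hsub : ∀ S : Finset W, C S ⊆ S)
    (hsubst : ∀ (S : Finset W) (w w' : W), w ∈ C S → w' ∈ S → w' ≠ w →
      w ∈ C (S.erase w'))
    (hcons : ∀ S S' : Finset W, C S ⊆ S' → S' ⊆ S → C S' = C S) :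
    ∀ S T : Finset W, C (S ∪ T) = C (C S ∪ T) := by
  -- Key lemma: if w ∈ C B, A ⊆ B, w ∈ A then w ∈ C A
  have key : ∀ n (B A : Finset W) (w : W), (B \ A).card = n → A ⊆ B → w ∈ C B → w ∈ A →
      w ∈ C A := by
    intro n
    induction n with
    | zero =>
      intro B A w hcard hAB hwB hwA
      have : B = A := by
        have : B \ A = ∅ := Finset.card_eq_zero.mp hcard
        have hBA : B ⊆ A := fun x hx => by
          by_contra hxA
          exact absurd (Finset.mem_sdiff.mpr ⟨hx, hxA⟩) (by simp [this])
        exact Finset.Subset.antisymm hBA hAB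
      rwa [this] at hwB
    | succ n ih =>
      intro B A w hcard hAB hwB hwA
      obtain ⟨w', hw'⟩ : (B \ A).Nonempty := Finset.card_pos.mp (by omega)
      obtain ⟨hw'B, hw'A⟩ := Finset.mem_sdiff.mp hw'
      have hne : w' ≠ w := fun h => hw'A (h ▸ hwA)
      have h1 : w ∈ C (B.erase w') := hsubst B w w' hwB hw'B hne
      refine ih (B.erase w') A w ?_ ?_ h1 hwA
      · rw [Finset.erase_sdiff_comm, Finset.card_erase_of_mem hw', hcard]
        omega
      · exact fun x hx => Finset.mem_erase.mpr ⟨fun h => hw'A (h ▸ hx), hAB hx⟩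
  intro S T
  refine (hcons (S ∪ T) (C S ∪ T) ?_ ?_).symm
  · intro w hw
    have hwST := hsub _ hw
    rcases Finset.mem_union.mp hwST with hS | hT
    · by_cases hT : w ∈ T
      · exact Finset.mem_union_right _ hT
      · exact Finset.mem_union_left _ (key _ (S ∪ T) S w rfl Finset.subset_union_left hw hS)
    · exact Finset.mem_union_right _ hT
  · exact Finset.union_subset_union_left (hsub S)
end

section
/- If a choice function C is a union of maximizers of a finite family of linear orders, i.e., C(S) = ⋃_{j ∈ J} max_S P_j where each P_j is a linear order on W and max_S P_j denotes the P_j-maximal element of S (when S is nonempty), then C is path-independent. -/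
/-- A choice function which is the union of the maximizers of a
finite nonempty family of linear orders is path-independent. -/
theorem unionOfMaximizers_pathIndependent
    {W : Type*} [DecidableEq W] [Fintype W]
    (J : Type*) [Fintype J] [Nonempty J]
    (P : J → LinearOrder W)
    (C : Finset W → Finset W)
    (hC : ∀ (S : Finset W) (w : W),
      w ∈ C S ↔ w ∈ S ∧ ∃ j : J, ∀ x ∈ S, (P j).le x w) :
    ∀ S T : Finset W, C (S ∪ T) = C (C S ∪ T) := by
  intro S T
  ext w
  rw [hC, hC]
  constructor
  · rintro ⟨hw, j, hmax⟩
    refine ⟨?_, j, ?_⟩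
    · rcases Finset.mem_union.1 hw with h | h
      · exact Finset.mem_union_left _ ((hC S w).2 ⟨h, j, fun x hx =>
          hmax x (Finset.mem_union_left _ hx)⟩)
      · exact Finset.mem_union_right _ h
    · intro x hx
      rcases Finset.mem_union.1 hx with h | h
      · exact hmax x (Finset.mem_union_left _ ((hC S x).1 h).1)
      · exact hmax x (Finset.mem_union_right _ h)
  · rintro ⟨hw, j, hmax⟩
    have hwST : w ∈ S ∪ T := by
      rcases Finset.mem_union.1 hw with h | h
      · exact Finset.mem_union_left _ ((hC S w).1 h).1
      · exact Finset.mem_union_right _ h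
    refine ⟨hwST, j, ?_⟩
    intro x hx
    rcases Finset.mem_union.1 hx with h | h
    · -- x ∈ S : take the P j maximum of S
      letI := P j
      have hSne : S.Nonempty := ⟨x, h⟩
      obtain ⟨m, hm, hmmax⟩ := S.exists_max_image id hSne
      have hmC : m ∈ C S := (hC S m).2 ⟨hm, j, fun y hy => hmmax y hy⟩
      exact le_trans (hmmax x h) (hmax m (Finset.mem_union_left _ hmC))
    · exact hmax x (Finset.mem_union_right _ h)
end

section
/- (Aizerman–Malishevski decomposition) Every path-independent choice function C on a finite set W with the property that C(S) ≠ ∅ for every nonempty S can be written as C(S) = ⋃_{j ∈ J} max_S P_j for some finite family {P_j}_{j∈J} of linear orders on W. -/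
/-!
Call a list `l` *greedy* for `R` if it enumerates `R` by repeatedly choosing, with `C`, an
element of what is left. Reading `l` as a linear order in which earlier entries rank higher,
every `w` is then chosen from the set of elements ranked at most `w`; by heredity of `C`
(a consequence of path independence) it is chosen from every smaller set in which it is the
maximum. Conversely, if `w ∈ C S`, a greedy list of `W` can be steered to list `w` before the
rest of `S`: as long as `w` is not chosen from what remains, `C` of what remains is not
contained in `S` (otherwise it would equal `C S ∋ w`), so it offers an element outside `S` to
list first. The finitely many greedy lists of `W` therefore give the required family.
-/

open Finset

section

variable {W : Type*} [DecidableEq W] {C : Finset W → Finset W}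

theorem mem_choice_of_subset (hsub : ∀ S, C S ⊆ S)
    (hpi : ∀ S T : Finset W, C (S ∪ T) = C (C S ∪ T))
    {S R : Finset W} {w : W} (hSR : S ⊆ R) (hw : w ∈ C R) (hwS : w ∈ S) : w ∈ C S := by
  have hR : C R = C (C S ∪ (R \ S)) := by
    rw [← hpi, union_sdiff_of_subset hSR]
  have hw' : w ∈ C S ∪ (R \ S) := hsub _ (hR ▸ hw)
  simpa [hwS] using hw'

theorem choice_eq_of_choice_subset (hpi : ∀ S T : Finset W, C (S ∪ T) = C (C S ∪ T))
    {S R : Finset W} (hSR : S ⊆ R) (hCR : C R ⊆ S) : C R = C S := by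
  simpa [union_eq_left.2 hSR, union_eq_right.2 hCR] using hpi R S

variable (C) in
inductive GreedyList : Finset W → List W → Prop
  | nil : GreedyList ∅ []
  | cons {R : Finset W} {a : W} {l : List W} :
      a ∈ C R → GreedyList (R.erase a) l → GreedyList R (a :: l)

namespace GreedyList

variable {R : Finset W} {l : List W}

theorem mem_iff (hsub : ∀ S, C S ⊆ S) (hl : GreedyList C R l) {x : W} : x ∈ l ↔ x ∈ R := by
  induction hl with
  | nil => simp
  | @cons R a l ha _ ih =>
    rw [List.mem_cons, ih, mem_erase]
    constructor
    · rintro (rfl | ⟨-, hx⟩)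
      exacts [hsub R ha, hx]
    · intro hx
      by_cases hxa : x = a
      exacts [.inl hxa, .inr ⟨hxa, hx⟩]

theorem length_eq (hsub : ∀ S, C S ⊆ S) (hl : GreedyList C R l) : l.length = #R := by
  induction hl with
  | nil => rfl
  | @cons R a l ha _ ih => rw [List.length_cons, ih, card_erase_add_one (hsub R ha)]

theorem mem_choice_filter (hl : GreedyList C R l) {w : W} (hw : w ∈ l) :
    w ∈ C (R.filter fun x => l.idxOf w ≤ l.idxOf x) := by
  induction hl with
  | nil => simp at hw
  | @cons R a l ha _ ih =>
    by_cases hwa : w = a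
    · subst hwa
      simpa using ha
    · have hw' : w ∈ l := (List.mem_cons.1 hw).resolve_left hwa
      have hset : (R.filter fun x => (a :: l).idxOf w ≤ (a :: l).idxOf x) =
          (R.erase a).filter fun x => l.idxOf w ≤ l.idxOf x := by
        ext x
        by_cases hxa : x = a
        · simp [hxa, List.idxOf_cons_ne _ (Ne.symm hwa)]
        · simp [hxa, List.idxOf_cons_ne _ (Ne.symm hwa), List.idxOf_cons_ne _ (Ne.symm hxa)]
      rw [hset]
      exact ih hw'

theorem mem_choice_of_forall_idxOf_le (hsub : ∀ S, C S ⊆ S)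
    (hpi : ∀ S T : Finset W, C (S ∪ T) = C (C S ∪ T)) (hl : GreedyList C R l)
    {S : Finset W} {w : W} (hSR : S ⊆ R) (hwS : w ∈ S) (htop : ∀ x ∈ S, l.idxOf w ≤ l.idxOf x) :
    w ∈ C S := by
  have hw : w ∈ l := (hl.mem_iff hsub).2 (hSR hwS)
  refine mem_choice_of_subset hsub hpi (fun x hx => ?_) (hl.mem_choice_filter hw) hwS
  exact mem_filter.2 ⟨hSR hx, htop x hx⟩

end GreedyList

theorem exists_greedyList (hsub : ∀ S, C S ⊆ S) (hne : ∀ S : Finset W, S.Nonempty → (C S).Nonempty)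
    (R : Finset W) : ∃ l, GreedyList C R l := by
  induction R using Finset.strongInduction with
  | _ R ih =>
    rcases R.eq_empty_or_nonempty with rfl | hR
    · exact ⟨[], .nil⟩
    · obtain ⟨a, ha⟩ := hne R hR
      obtain ⟨l, hl⟩ := ih (R.erase a) (erase_ssubset (hsub R ha))
      exact ⟨a :: l, .cons ha hl⟩

theorem exists_greedyList_forall_idxOf_le (hsub : ∀ S, C S ⊆ S)
    (hne : ∀ S : Finset W, S.Nonempty → (C S).Nonempty)
    (hpi : ∀ S T : Finset W, C (S ∪ T) = C (C S ∪ T)) {S : Finset W} {w : W} (hw : w ∈ C S)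
    (R : Finset W) (hSR : S ⊆ R) :
    ∃ l, GreedyList C R l ∧ ∀ x ∈ S, l.idxOf w ≤ l.idxOf x := by
  induction R using Finset.strongInduction with
  | _ R ih =>
    by_cases hwR : w ∈ C R
    · obtain ⟨l, hl⟩ := exists_greedyList hsub hne (R.erase w)
      exact ⟨w :: l, .cons hwR hl, fun x _ => by simp⟩
    · obtain ⟨a, haC, haS⟩ : ∃ a ∈ C R, a ∉ S := by
        by_contra! hCS
        exact hwR (choice_eq_of_choice_subset hpi hSR hCS ▸ hw)
      have hSR' : S ⊆ R.erase a := fun x hx => mem_erase.2 ⟨ne_of_mem_of_not_mem hx haS, hSR hx⟩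
      obtain ⟨l, hl, htop⟩ := ih (R.erase a) (erase_ssubset (hsub R haC)) hSR'
      have hshift : ∀ x ∈ S, (a :: l).idxOf x = l.idxOf x + 1 := fun x hx =>
        List.idxOf_cons_ne _ (ne_of_mem_of_not_mem hx haS).symm
      refine ⟨a :: l, .cons haC hl, fun x hx => ?_⟩
      rw [hshift x hx, hshift w (hsub S hw)]
      exact Nat.succ_le_succ (htop x hx)

abbrev List.precedenceOrder (l : List W) (hl : ∀ x, x ∈ l) : LinearOrder W :=
  LinearOrder.lift' (fun x => OrderDual.toDual (l.idxOf x)) fun x _ h => (List.idxOf_inj (hl x)).1 h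

theorem List.precedenceOrder_le_iff {l : List W} (hl : ∀ x, x ∈ l) {x y : W} :
    (l.precedenceOrder hl).le x y ↔ l.idxOf y ≤ l.idxOf x :=
  Iff.rfl

theorem finite_greedyList [Fintype W] (hsub : ∀ S, C S ⊆ S) :
    Finite {l : List W // GreedyList C univ l} :=
  ((List.finite_length_eq W (Fintype.card W)).subset fun _ hl => hl.length_eq hsub).to_subtype

end

/-- Aizerman–Malishevski decomposition: every path-independent
choice function on a finite set `W` that chooses something from every nonempty
set is the union of the maximizers of a finite family of linear orders. -/
theorem aizerman_malishevski_decomposition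
    {W : Type*} [DecidableEq W] [Fintype W]
    (C : Finset W → Finset W)
    (hsub : ∀ S : Finset W, C S ⊆ S)
    (hne : ∀ S : Finset W, S.Nonempty → (C S).Nonempty)
    (hpi : ∀ S T : Finset W, C (S ∪ T) = C (C S ∪ T)) :
    ∃ (J : Type) (_ : Fintype J) (_ : Nonempty J) (P : J → LinearOrder W),
      ∀ (S : Finset W) (w : W),
        w ∈ C S ↔ w ∈ S ∧ ∃ j : J, ∀ x ∈ S, (P j).le x w := by
  have : Finite {l : List W // GreedyList C univ l} := finite_greedyList hsub
  obtain ⟨k, ⟨e⟩⟩ := Finite.exists_equiv_fin {l : List W // GreedyList C univ l}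
  obtain ⟨l₀, hl₀⟩ := exists_greedyList hsub hne univ
  have hmem (l : {l : List W // GreedyList C univ l}) (x : W) : x ∈ l.1 :=
    (l.2.mem_iff hsub).2 (mem_univ x)
  refine ⟨Fin k, inferInstance, ⟨e ⟨l₀, hl₀⟩⟩,
    fun i => (e.symm i).1.precedenceOrder (hmem _), fun S w => ⟨fun hw => ?_, ?_⟩⟩
  · obtain ⟨l, hl, htop⟩ := exists_greedyList_forall_idxOf_le hsub hne hpi hw univ (subset_univ S)
    exact ⟨hsub S hw, e ⟨l, hl⟩, fun x hx => by
      rw [List.precedenceOrder_le_iff, e.symm_apply_apply]; exact htop x hx⟩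
  · rintro ⟨hwS, i, hi⟩
    exact (e.symm i).2.mem_choice_of_forall_idxOf_le hsub hpi (subset_univ S) hwS
      fun x hx => (List.precedenceOrder_le_iff _).1 (hi x hx)
end

section
/- Let C be a path-independent choice function on a finite set W (with C(S) nonempty for nonempty S). Fix a nonempty S ⊆ W and construct a sequence w_1 ∈ C(S), w_2 ∈ C(S \ {w_1}), ..., w_k ∈ C(S \ {w_1,...,w_{k-1}}) until S is exhausted. Then w_1 ∈ C(S') for every subset S' ⊆ S containing w_1; in particular the linear order listing w_1, w_2, ... picks an element of C(S) as its maximum on S. -/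
/-- correctness of the greedy construction in the
Aizerman–Malishevski decomposition.  If `ws = w₁, w₂, …` enumerates a nonempty
`S` so that each `wₖ` is chosen by `C` from `S` minus the previously selected
workers, then the first element `w₁` belongs to `C S'` for every subset
`S' ⊆ S` containing it (in particular, taking `S' = S`, the linear order
listing `w₁, w₂, …` picks an element of `C S` as its maximum on `S`). -/
theorem greedy_head_chosen_in_subsets
    {W : Type*} [DecidableEq W] [Fintype W]
    (C : Finset W → Finset W)
    (hsub : ∀ S : Finset W, C S ⊆ S)
    (hne : ∀ S : Finset W, S.Nonempty → (C S).Nonempty)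
    (hpi : ∀ S T : Finset W, C (S ∪ T) = C (C S ∪ T))
    (S : Finset W) (hS : S.Nonempty)
    (ws : List W) (hnd : ws.Nodup) (hws : ws.toFinset = S)
    (hgreedy : ∀ (k : ℕ) (hk : k < ws.length),
      ws.get ⟨k, hk⟩ ∈ C (S \ (ws.take k).toFinset))
    (w₁ : W) (h₁ : ws.head? = some w₁) :
    ∀ S' ⊆ S, w₁ ∈ S' → w₁ ∈ C S' := by
  intro S' hS'sub hw₁S'
  -- first: w₁ ∈ C S
  have hlen : 0 < ws.length := by
    cases ws with
    | nil => simp at h₁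
    | cons a l => simp
  have hget : ws.get ⟨0, hlen⟩ = w₁ := by
    cases ws with
    | nil => simp at h₁
    | cons a l => simpa using h₁
  have h0 := hgreedy 0 hlen
  rw [hget] at h0
  simp only [List.take_zero, List.toFinset_nil, Finset.sdiff_empty] at h0
  -- path independence gives the α condition
  have hunion : S' ∪ S = S := Finset.union_eq_right.mpr hS'sub
  have hCS : C S = C (C S' ∪ S) := by
    conv_lhs => rw [← hunion]
    exact hpi S' S
  have hmem : w₁ ∈ C S' ∪ S := hsub _ (hCS ▸ h0)
  -- show w₁ ∈ C S' using again PI with S = S' ∪ (S \ S')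
  have hsplit : S' ∪ (S \ S') = S := by
    rw [Finset.union_sdiff_self_eq_union, Finset.union_eq_right.mpr hS'sub]
  have hCS2 : C S = C (C S' ∪ (S \ S')) := by
    conv_lhs => rw [← hsplit]
    exact hpi _ _
  have : w₁ ∈ C S' ∪ (S \ S') := hsub _ (hCS2 ▸ h0)
  rcases Finset.mem_union.mp this with h | h
  · exact h
  · exact absurd (Finset.mem_sdiff.mp h).2 (not_not.mpr hw₁S')
end

section
/- The output λ_F of the adapted firm-copies-proposing deferred acceptance algorithm in the associated one-to-one market is individually rational*: every worker weakly prefers her assignment to being unmatched, every firm-copy weakly prefers its assignment to being unmatched, and no matched firm-copy envies the worker matched to another copy of the same firm. -/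
open Classical

noncomputable section

/- The associated one-to-one market: firm `i : ι` has copies indexed by
`Fin (J i)`; firm-copies have linear preferences `Pf f` over `Option W`
(`none` = `∅`, larger = better); workers have linear preferences `Pw w` over
`Option (Σ i, Fin (J i))`, which refine a linear preference `PwFirm w` over the
firms (`Option ι`): all copies of a preferred firm rank above all copies of a
less preferred firm, and copies of the same firm are ranked by index. -/

/-- The best element of a finite set of alternatives (`none` included) with
respect to a linear order `L`. -/
def bestOf {α : Type*} (L : LinearOrder (Option α)) (s : Finset (Option α)) :
    Option α :=
  WithBot.unbotD none (@Finset.max (Option α) L s)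

/-- State of the deferred acceptance algorithm: the current tentative matching
(from the firm-copies' side) and, for each firm-copy, the set of workers that
have rejected it so far. -/
structure DAState (ι W : Type*) (J : ι → ℕ) where
  lam : (Σ i : ι, Fin (J i)) → Option W
  rej : (Σ i : ι, Fin (J i)) → Finset W

variable {ι W : Type*} [Fintype ι] [DecidableEq ι] [Fintype W] [DecidableEq W]
  {J : ι → ℕ}

/-- The offer made by firm-copy `f` at the current stage: if `f` is unmatched,
it targets its best acceptable worker among those who have not rejected it yet,
and it is *authorized* to make this offer only if no other copy of the same
firm currently holds a worker that `f` strictly prefers. -/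
def proposalF [Fintype ι] [∀ i : ι, Fintype (Fin (J i))]
    (Pf : (Σ i : ι, Fin (J i)) → LinearOrder (Option W))
    (st : DAState ι W J) (f : Σ i : ι, Fin (J i)) : Option W :=
  if st.lam f ≠ none then none
  else
    match bestOf (Pf f)
        (insert none ((Finset.univ.filter (fun w : W => w ∉ st.rej f)).image some)) with
    | none => none
    | some w =>
        if ∀ (j' : Fin (J f.1)) (w' : W),
            st.lam ⟨f.1, j'⟩ = some w' → ¬ (Pf f).lt (some w) (some w')
        then some w else none

/-- The firm-copy (if any) tentatively selected by worker `w`: the best, with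
respect to `Pw w`, among the copies currently offering to `w`, her current
partner, and `∅`. -/
def chosenByWorker
    (Pf : (Σ i : ι, Fin (J i)) → LinearOrder (Option W))
    (Pw : W → LinearOrder (Option (Σ i : ι, Fin (J i))))
    (st : DAState ι W J) (w : W) : Option (Σ i : ι, Fin (J i)) :=
  bestOf (Pw w)
    (insert none
      ((Finset.univ.filter
        (fun f : Σ i : ι, Fin (J i) =>
          proposalF Pf st f = some w ∨ st.lam f = some w)).image some))

/-- One stage of the adapted firm-copies-proposing deferred acceptance
algorithm. -/
def stepF
    (Pf : (Σ i : ι, Fin (J i)) → LinearOrder (Option W))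
    (Pw : W → LinearOrder (Option (Σ i : ι, Fin (J i))))
    (st : DAState ι W J) : DAState ι W J where
  lam := fun f =>
    if h : ∃ w : W, chosenByWorker Pf Pw st w = some f then some h.choose
    else none
  rej := fun f =>
    st.rej f ∪
      Finset.univ.filter
        (fun w : W =>
          (proposalF Pf st f = some w ∨ st.lam f = some w) ∧
            chosenByWorker Pf Pw st w ≠ some f)

/-- The output `λ_F` of the adapted firm-copies-proposing deferred acceptance
algorithm (run for sufficiently many stages so that it has terminated). -/
def daOutputF
    (Pf : (Σ i : ι, Fin (J i)) → LinearOrder (Option W))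
    (Pw : W → LinearOrder (Option (Σ i : ι, Fin (J i)))) :
    (Σ i : ι, Fin (J i)) → Option W :=
  ((stepF Pf Pw)^[(Fintype.card (Σ i : ι, Fin (J i)) * Fintype.card W + 1) *
      (Fintype.card (Σ i : ι, Fin (J i)) + Fintype.card W + 2)]
    ⟨fun _ => none, fun _ => ∅⟩).lam

/-- The worker-side of the output matching. -/
def daOutputFW
    (Pf : (Σ i : ι, Fin (J i)) → LinearOrder (Option W))
    (Pw : W → LinearOrder (Option (Σ i : ι, Fin (J i)))) (w : W) :
    Option (Σ i : ι, Fin (J i)) :=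
  if h : ∃ f : Σ i : ι, Fin (J i), daOutputF Pf Pw f = some w then some h.choose
  else none

lemma bestOf_eq_max' {α : Type*} (L : LinearOrder (Option α)) {s : Finset (Option α)}
    (hs : s.Nonempty) : bestOf L s = @Finset.max' _ L s hs := by
  let := L
  rw [bestOf, ← Finset.coe_max' hs, WithBot.unbotD_coe]

lemma bestOf_mem {α : Type*} (L : LinearOrder (Option α)) {s : Finset (Option α)}
    (hs : s.Nonempty) : bestOf L s ∈ s := by
  let := L
  rw [bestOf_eq_max' L hs]
  exact s.max'_mem hs

lemma le_bestOf {α : Type*} (L : LinearOrder (Option α)) {s : Finset (Option α)}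
    {x : Option α} (hx : x ∈ s) : L.le x (bestOf L s) := by
  let := L
  rw [bestOf_eq_max' L ⟨x, hx⟩]
  exact s.le_max' x hx

omit [Fintype ι] [DecidableEq ι] in
lemma exists_copy_of_lt_of_le {L : LinearOrder (Option (Σ i : ι, Fin (J i)))}
    {LF : LinearOrder (Option ι)}
    (h1 : ∀ (i i' : ι) (j : Fin (J i)) (j' : Fin (J i')),
      LF.lt (some i') (some i) → L.lt (some ⟨i', j'⟩) (some ⟨i, j⟩))
    (h0 : ∀ (i : ι) (j : Fin (J i)), LF.lt none (some i) ↔ L.lt none (some ⟨i, j⟩))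
    {i : ι} {j j' : Fin (J i)} {q : Option (Σ i : ι, Fin (J i))}
    (hlt : L.lt (some ⟨i, j⟩) q) (hle : L.le q (some ⟨i, j'⟩)) :
    ∃ l : Fin (J i), q = some ⟨i, l⟩ := by
  let := L
  let := LF
  rcases q with _ | ⟨i₂, l⟩
  · exact absurd ((h0 i j).1 ((h0 i j').2 (lt_of_le_of_ne hle (by simp)))) (not_lt.2 hlt.le)
  · obtain rfl | hi := eq_or_ne i₂ i
    · exact ⟨l, rfl⟩
    rcases lt_trichotomy (some i : Option ι) (some i₂) with h | h | h
    · exact absurd hle (not_le.2 (h1 i₂ i l j' h))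
    · exact absurd (Option.some.inj h).symm hi
    · exact absurd hlt (not_lt.2 (h1 i i₂ j l h).le)

def DAState.partner (st : DAState ι W J) (w : W) : Option (Σ i : ι, Fin (J i)) :=
  if h : ∃ f, st.lam f = some w then some h.choose else none

omit [DecidableEq ι] [Fintype W] in
lemma DAState.lam_eq_some_of_partner_eq_some {st : DAState ι W J} {f : Σ i : ι, Fin (J i)}
    {w : W} (h : st.partner w = some f) : st.lam f = some w := by
  rw [DAState.partner] at h
  split_ifs at h with hex
  exact Option.some.inj h ▸ hex.choose_spec

section Algorithm

variable (Pf : (Σ i : ι, Fin (J i)) → LinearOrder (Option W))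
  (Pw : W → LinearOrder (Option (Σ i : ι, Fin (J i))))

def daSeq (k : ℕ) : DAState ι W J :=
  (stepF Pf Pw)^[k] ⟨fun _ => none, fun _ => ∅⟩

lemma daSeq_succ (k : ℕ) : daSeq Pf Pw (k + 1) = stepF Pf Pw (daSeq Pf Pw k) :=
  Function.iterate_succ_apply' _ _ _

variable {Pf Pw} {st : DAState ι W J} {f : Σ i : ι, Fin (J i)} {w : W}

section Proposal

omit [DecidableEq ι]

lemma proposalF_eq_some (h : proposalF Pf st f = some w) :
    st.lam f = none ∧
    bestOf (Pf f) (insert none ((Finset.univ.filter (· ∉ st.rej f)).image some)) = some w ∧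
    ∀ (j' : Fin (J f.1)) (w' : W), st.lam ⟨f.1, j'⟩ = some w' →
      ¬ (Pf f).lt (some w) (some w') := by
  unfold proposalF at h
  split_ifs at h with hlam
  split at h
  · simp at h
  next w₀ hbest =>
    split_ifs at h with hauth
    obtain rfl := Option.some.inj h
    exact ⟨not_not.1 hlam, hbest, hauth⟩

lemma none_lt_of_proposalF_eq_some (h : proposalF Pf st f = some w) :
    (Pf f).lt none (some w) := by
  let := Pf f
  have hbest := (proposalF_eq_some h).2.1
  exact lt_of_le_of_ne (hbest ▸ le_bestOf (Pf f) (Finset.mem_insert_self _ _)) (by simp)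

lemma le_of_proposalF_eq_some {w' : W} (h : proposalF Pf st f = some w')
    (hw : w ∉ st.rej f) : (Pf f).le (some w) (some w') := by
  rw [← (proposalF_eq_some h).2.1]
  exact le_bestOf (Pf f) (Finset.mem_insert_of_mem (by simpa using hw))

lemma eq_of_proposalF_or_lam_eq_some {w' : W}
    (h : proposalF Pf st f = some w ∨ st.lam f = some w)
    (h' : proposalF Pf st f = some w' ∨ st.lam f = some w') : w = w' := by
  rcases h with h | h <;> rcases h' with h' | h'
  · exact Option.some.inj (h.symm.trans h')
  · simp [(proposalF_eq_some h).1] at h'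
  · simp [(proposalF_eq_some h').1] at h
  · exact Option.some.inj (h.symm.trans h')

end Proposal

variable (Pf Pw) in
lemma none_le_chosenByWorker : (Pw w).le none (chosenByWorker Pf Pw st w) :=
  le_bestOf (Pw w) (Finset.mem_insert_self _ _)

lemma le_chosenByWorker (h : proposalF Pf st f = some w ∨ st.lam f = some w) :
    (Pw w).le (some f) (chosenByWorker Pf Pw st w) :=
  le_bestOf (Pw w) (Finset.mem_insert_of_mem (by simpa using h))

lemma proposalF_or_lam_of_chosenByWorker_eq_some (h : chosenByWorker Pf Pw st w = some f) :
    proposalF Pf st f = some w ∨ st.lam f = some w := by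
  have hmem := bestOf_mem (Pw w) (Finset.insert_nonempty none ((Finset.univ.filter
    fun g => proposalF Pf st g = some w ∨ st.lam g = some w).image some))
  rw [← chosenByWorker, h] at hmem
  simpa using hmem

lemma stepF_lam_eq_some_iff :
    (stepF Pf Pw st).lam f = some w ↔ chosenByWorker Pf Pw st w = some f := by
  have hlam : (stepF Pf Pw st).lam f =
      if h : ∃ w, chosenByWorker Pf Pw st w = some f then some h.choose else none := rfl
  constructor
  · intro h
    rw [hlam] at h
    split_ifs at h with hex
    exact Option.some.inj h ▸ hex.choose_spec
  · intro h
    have hex : ∃ w, chosenByWorker Pf Pw st w = some f := ⟨w, h⟩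
    rw [hlam, dif_pos hex]
    exact congrArg some (eq_of_proposalF_or_lam_eq_some
      (proposalF_or_lam_of_chosenByWorker_eq_some hex.choose_spec)
      (proposalF_or_lam_of_chosenByWorker_eq_some h))

lemma mem_stepF_rej_iff :
    w ∈ (stepF Pf Pw st).rej f ↔ w ∈ st.rej f ∨
      ((proposalF Pf st f = some w ∨ st.lam f = some w) ∧ chosenByWorker Pf Pw st w ≠ some f) := by
  simp [stepF]

variable (Pf Pw) in
lemma partner_stepF : (stepF Pf Pw st).partner w = chosenByWorker Pf Pw st w := by
  rcases hc : chosenByWorker Pf Pw st w with _ | f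
  · rw [DAState.partner, dif_neg]
    rintro ⟨f, hf⟩
    simp [stepF_lam_eq_some_iff.1 hf] at hc
  · have hf : (stepF Pf Pw st).lam f = some w := stepF_lam_eq_some_iff.2 hc
    rw [DAState.partner, dif_pos ⟨f, hf⟩]
    have hex : ∃ g, (stepF Pf Pw st).lam g = some w := ⟨f, hf⟩
    exact (stepF_lam_eq_some_iff.1 hex.choose_spec).symm.trans hc

variable (Pf Pw) in
lemma partner_le_partner_stepF : (Pw w).le (st.partner w) ((stepF Pf Pw st).partner w) := by
  rw [partner_stepF]
  rcases hp : st.partner w with _ | f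
  · exact none_le_chosenByWorker Pf Pw
  · exact le_chosenByWorker (Or.inr (DAState.lam_eq_some_of_partner_eq_some hp))

lemma partner_daSeq_mono {k m : ℕ} (hkm : k ≤ m) :
    (Pw w).le ((daSeq Pf Pw k).partner w) ((daSeq Pf Pw m).partner w) := by
  let := Pw w
  induction m, hkm using Nat.le_induction with
  | base => exact le_rfl
  | succ m _ ih => exact ih.trans (daSeq_succ Pf Pw m ▸ partner_le_partner_stepF Pf Pw)

lemma daSeq_partner_eq_some_iff {k : ℕ} :
    (daSeq Pf Pw k).partner w = some f ↔ (daSeq Pf Pw k).lam f = some w := by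
  cases k with
  | zero => simp [daSeq, DAState.partner]
  | succ k => rw [daSeq_succ, partner_stepF, stepF_lam_eq_some_iff]

lemma none_le_partner_daSeq (k : ℕ) : (Pw w).le none ((daSeq Pf Pw k).partner w) := by
  have hzero : (daSeq Pf Pw 0).partner w = none := by simp [daSeq, DAState.partner]
  exact hzero ▸ partner_daSeq_mono (Nat.zero_le k)

lemma exists_proposalF_of_daSeq_lam_eq_some {k : ℕ} (h : (daSeq Pf Pw k).lam f = some w) :
    ∃ m < k, proposalF Pf (daSeq Pf Pw m) f = some w := by
  induction k with
  | zero => simp [daSeq] at h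
  | succ k ih =>
    rw [daSeq_succ, stepF_lam_eq_some_iff] at h
    rcases proposalF_or_lam_of_chosenByWorker_eq_some h with hprop | hlam
    · exact ⟨k, k.lt_succ_self, hprop⟩
    · obtain ⟨m, hm, hprop⟩ := ih hlam
      exact ⟨m, hm.trans k.lt_succ_self, hprop⟩

lemma none_le_daSeq_lam (k : ℕ) (f : Σ i : ι, Fin (J i)) :
    (Pf f).le none ((daSeq Pf Pw k).lam f) := by
  let := Pf f
  rcases h : (daSeq Pf Pw k).lam f with _ | w
  · exact le_rfl
  · obtain ⟨m, -, hprop⟩ := exists_proposalF_of_daSeq_lam_eq_some h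
    exact (none_lt_of_proposalF_eq_some hprop).le

lemma lt_partner_of_mem_daSeq_rej {k : ℕ} (h : w ∈ (daSeq Pf Pw k).rej f) :
    (Pw w).lt (some f) ((daSeq Pf Pw k).partner w) := by
  let := Pw w
  induction k with
  | zero => simp [daSeq] at h
  | succ k ih =>
    rw [daSeq_succ] at h ⊢
    rcases mem_stepF_rej_iff.1 h with hrej | ⟨hoffer, hne⟩
    · exact (ih hrej).trans_le (partner_le_partner_stepF Pf Pw)
    · rw [partner_stepF]
      exact (le_chosenByWorker hoffer).lt_of_ne (Ne.symm hne)

/-- If `⟨i, j⟩` envied the worker `w'` of `⟨i, j'⟩`, then `w'` rejected `⟨i, j⟩` before its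
proposal to `w`, so at that proposal `w'` already held a partner strictly better than `⟨i, j⟩`
and weakly worse than `⟨i, j'⟩`; by conditions (1) this is a copy of firm `i`, and its holding
`w'` would have blocked the proposal. -/
lemma not_lt_daSeq_lam_of_same_firm (PwFirm : W → LinearOrder (Option ι))
    (hcond1 : ∀ (w : W) (i i' : ι) (j : Fin (J i)) (j' : Fin (J i')),
      (PwFirm w).lt (some i') (some i) → (Pw w).lt (some ⟨i', j'⟩) (some ⟨i, j⟩))
    (hcond0 : ∀ (w : W) (i : ι) (j : Fin (J i)),
      ((PwFirm w).lt none (some i) ↔ (Pw w).lt none (some ⟨i, j⟩)))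
    {k : ℕ} {i : ι} {j j' : Fin (J i)} (hw : (daSeq Pf Pw k).lam ⟨i, j⟩ = some w) :
    ¬ (Pf ⟨i, j⟩).lt (some w) ((daSeq Pf Pw k).lam ⟨i, j'⟩) := by
  let := Pf ⟨i, j⟩
  intro hlt
  rcases hw' : (daSeq Pf Pw k).lam ⟨i, j'⟩ with _ | w'
  · rw [hw'] at hlt
    exact absurd (none_le_daSeq_lam k ⟨i, j⟩) (not_le.2 (hw ▸ hlt))
  rw [hw'] at hlt
  obtain ⟨m, hmk, hprop⟩ := exists_proposalF_of_daSeq_lam_eq_some hw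
  have hrej : w' ∈ (daSeq Pf Pw m).rej ⟨i, j⟩ := by
    by_contra hnot
    exact not_le.2 hlt (le_of_proposalF_eq_some hprop hnot)
  have hbelow := lt_partner_of_mem_daSeq_rej hrej
  have habove : (Pw w').le ((daSeq Pf Pw m).partner w') (some ⟨i, j'⟩) :=
    daSeq_partner_eq_some_iff.2 hw' ▸ partner_daSeq_mono hmk.le
  obtain ⟨l, hl⟩ := exists_copy_of_lt_of_le (hcond1 w') (hcond0 w') hbelow habove
  exact (proposalF_eq_some hprop).2.2 l w' (DAState.lam_eq_some_of_partner_eq_some hl) hlt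

end Algorithm

theorem daOutputF_individuallyRationalStar_general
    (Pf : (Σ i : ι, Fin (J i)) → LinearOrder (Option W))
    (Pw : W → LinearOrder (Option (Σ i : ι, Fin (J i))))
    (PwFirm : W → LinearOrder (Option ι))
    -- condition (1): copies of a more preferred firm rank above copies of a
    -- less preferred firm
    (hcond1 : ∀ (w : W) (i i' : ι) (j : Fin (J i)) (j' : Fin (J i')),
      (PwFirm w).lt (some i') (some i) →
        (Pw w).lt (some ⟨i', j'⟩) (some ⟨i, j⟩))
    -- condition (1) for ∅: a firm is acceptable iff its copies are
    (hcond0 : ∀ (w : W) (i : ι) (j : Fin (J i)),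
      ((PwFirm w).lt none (some i) ↔ (Pw w).lt none (some ⟨i, j⟩))) :
    -- every worker weakly prefers her assignment to being unmatched
    (∀ w : W, (Pw w).le none (daOutputFW Pf Pw w)) ∧
    -- every firm-copy weakly prefers its assignment to being unmatched
    (∀ f : Σ i : ι, Fin (J i), (Pf f).le none (daOutputF Pf Pw f)) ∧
    -- no matched firm-copy envies another copy of the same firm
    (∀ (i : ι) (j j' : Fin (J i)), daOutputF Pf Pw ⟨i, j⟩ ≠ none →
      ¬ (Pf ⟨i, j⟩).lt (daOutputF Pf Pw ⟨i, j⟩) (daOutputF Pf Pw ⟨i, j'⟩)) := by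
  obtain ⟨N, hF, hFW⟩ : ∃ N, daOutputF Pf Pw = (daSeq Pf Pw N).lam ∧
      daOutputFW Pf Pw = (daSeq Pf Pw N).partner := ⟨_, rfl, rfl⟩
  rw [hFW, hF]
  refine ⟨fun w => none_le_partner_daSeq N, none_le_daSeq_lam N, fun i j j' hne => ?_⟩
  obtain ⟨w, hw⟩ := Option.ne_none_iff_exists'.1 hne
  rw [hw]
  exact not_lt_daSeq_lam_of_same_firm PwFirm hcond1 hcond0 hw

/-- the output `λ_F` of the adapted firm-copies-proposing deferred
acceptance algorithm is individually rational*: every worker weakly prefers her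
assignment to `∅`, every firm-copy weakly prefers its assignment to `∅`, and no
matched firm-copy envies the worker matched to another copy of the same firm. -/
theorem daOutputF_individuallyRationalStar
    (Pf : (Σ i : ι, Fin (J i)) → LinearOrder (Option W))
    (Pw : W → LinearOrder (Option (Σ i : ι, Fin (J i))))
    (PwFirm : W → LinearOrder (Option ι))
    -- condition (1): copies of a more preferred firm rank above copies of a
    -- less preferred firm
    (hcond1 : ∀ (w : W) (i i' : ι) (j : Fin (J i)) (j' : Fin (J i')),
      (PwFirm w).lt (some i') (some i) →
        (Pw w).lt (some ⟨i', j'⟩) (some ⟨i, j⟩))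
    -- condition (1) for ∅: a firm is acceptable iff its copies are
    (hcond0 : ∀ (w : W) (i : ι) (j : Fin (J i)),
      ((PwFirm w).lt none (some i) ↔ (Pw w).lt none (some ⟨i, j⟩)))
    -- condition (2): copies of the same firm are ranked by index
    (hcond2 : ∀ (w : W) (i : ι) (j j' : Fin (J i)),
      ((Pw w).lt (some ⟨i, j'⟩) (some ⟨i, j⟩) ↔ (j : ℕ) < (j' : ℕ))) :
    -- every worker weakly prefers her assignment to being unmatched
    (∀ w : W, (Pw w).le none (daOutputFW Pf Pw w)) ∧
    -- every firm-copy weakly prefers its assignment to being unmatched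
    (∀ f : Σ i : ι, Fin (J i), (Pf f).le none (daOutputF Pf Pw f)) ∧
    -- no matched firm-copy envies another copy of the same firm
    (∀ (i : ι) (j j' : Fin (J i)), daOutputF Pf Pw ⟨i, j⟩ ≠ none →
      ¬ (Pf ⟨i, j⟩).lt (daOutputF Pf Pw ⟨i, j⟩) (daOutputF Pf Pw ⟨i, j'⟩)) :=
  daOutputF_individuallyRationalStar_general Pf Pw PwFirm hcond1 hcond0

end
end

section
/- If λ is a stable* matching of the associated one-to-one market, then the map T(λ) = μ defined by μ(φ_i) = ⋃_{j∈J_i} {λ(f_{ij})} is a well-defined many-to-one matching: no worker is assigned to copies of two distinct firms. -/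
open Classical

noncomputable section

/- Many-to-one market: firms `ι` with path-independent choice functions
`C i : Finset W → Finset W`, workers `W` with linear preferences `PwFirm w`
over `Option ι` (`none` = `∅`, larger = better).  Via the Aizerman–Malishevski
decomposition `C i S = ⋃_{j} max_S P_{ij}`, firm `i` is split into copies
indexed by `Fin (J i)`; firm-copy `⟨i, j⟩` has the linear preference
`Pf ⟨i, j⟩` over `Option W`, and workers have linear preferences `Pw w` over
`Option (Σ i, Fin (J i))` refining `PwFirm w`. -/

section Defs

variable {ι W : Type*} [Fintype ι] [DecidableEq ι] [Fintype W] [DecidableEq W]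
  {J : ι → ℕ}

/-- `lamF`, `lamW` form a one-to-one matching. -/
def OneIsMatching (lamF : (Σ i : ι, Fin (J i)) → Option W)
    (lamW : W → Option (Σ i : ι, Fin (J i))) : Prop :=
  ∀ (f : Σ i : ι, Fin (J i)) (w : W), lamF f = some w ↔ lamW w = some f

/-- Stability* of a one-to-one matching: no worker prefers `∅` to her match, no
firm-copy prefers `∅` to its match, no matched firm-copy envies another copy of
the same firm, and there is no blocking* pair `(f, w)` (i.e. `w` prefers `f` to
her match and `f` prefers `w` to the match of every copy of the same firm). -/
def StableStar (Pf : (Σ i : ι, Fin (J i)) → LinearOrder (Option W))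
    (Pw : W → LinearOrder (Option (Σ i : ι, Fin (J i))))
    (lamF : (Σ i : ι, Fin (J i)) → Option W)
    (lamW : W → Option (Σ i : ι, Fin (J i))) : Prop :=
  (∀ w : W, ¬ (Pw w).lt (lamW w) none) ∧
  (∀ f : Σ i : ι, Fin (J i),
    ¬ ((Pf f).lt (lamF f) none ∨
      (lamF f ≠ none ∧ ∃ j' : Fin (J f.1), (Pf f).lt (lamF f) (lamF ⟨f.1, j'⟩)))) ∧
  (∀ (f : Σ i : ι, Fin (J i)) (w : W),
    ¬ ((Pw w).lt (lamW w) (some f) ∧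
      ∀ j' : Fin (J f.1), (Pf f).lt (lamF ⟨f.1, j'⟩) (some w)))

/-- `muW`, `muF` form a many-to-one matching. -/
def ManyIsMatching (muW : W → Option ι) (muF : ι → Finset W) : Prop :=
  ∀ (i : ι) (w : W), w ∈ muF i ↔ muW w = some i

/-- Stability of a many-to-one matching: individual rationality for workers
and firms, and no blocking worker–firm pair. -/
def ManyStable (C : ι → Finset W → Finset W)
    (PwFirm : W → LinearOrder (Option ι))
    (muW : W → Option ι) (muF : ι → Finset W) : Prop :=
  (∀ w : W, (PwFirm w).le none (muW w)) ∧
  (∀ i : ι, C i (muF i) = muF i) ∧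
  (∀ (w : W) (i : ι),
    ¬ (w ∉ muF i ∧ w ∈ C i (insert w (muF i)) ∧ (PwFirm w).lt (muW w) (some i)))

/-- The choice functions `C` are decomposed à la Aizerman–Malishevski by the
linear orders `Pf ⟨i, j⟩`: `C i S = ⋃_{j ∈ J_i} max_S P_{ij}`. -/
def AMDecomposition (C : ι → Finset W → Finset W)
    (Pf : (Σ i : ι, Fin (J i)) → LinearOrder (Option W)) : Prop :=
  ∀ (i : ι) (S : Finset W) (w : W),
    w ∈ C i S ↔ w ∈ S ∧ ∃ j : Fin (J i), ∀ x ∈ S, (Pf ⟨i, j⟩).le (some x) (some w)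

/-- `T(λ)`, firm side: `μ(φ_i) = ⋃_{j ∈ J_i} {λ(f_{ij})}`. -/
def Tfirm (lamF : (Σ i : ι, Fin (J i)) → Option W) (i : ι) : Finset W :=
  Finset.univ.filter fun w : W => ∃ j : Fin (J i), lamF ⟨i, j⟩ = some w

/-- `T(λ)`, worker side: `μ(w)` is the firm owning the copy `λ(w)`. -/
def Tworker (lamW : W → Option (Σ i : ι, Fin (J i))) (w : W) : Option ι :=
  (lamW w).map Sigma.fst

/-- `T⁻¹(μ)`, worker side: a worker `w ∈ μ(φ_i)` is matched to the copy
`f_{ij}` of `φ_i` with the smallest index `j` such that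
`w = max_{μ(φ_i)} P_{ij}`. -/
def TinvW (Pf : (Σ i : ι, Fin (J i)) → LinearOrder (Option W))
    (muW : W → Option ι) (muF : ι → Finset W) (w : W) :
    Option (Σ i : ι, Fin (J i)) :=
  match muW w with
  | none => none
  | some i =>
      if h : (Finset.univ.filter (fun j : Fin (J i) =>
          ∀ x ∈ muF i, (Pf ⟨i, j⟩).le (some x) (some w))).Nonempty then
        some ⟨i, (Finset.univ.filter (fun j : Fin (J i) =>
          ∀ x ∈ muF i, (Pf ⟨i, j⟩).le (some x) (some w))).min' h⟩
      else none

/-- `T⁻¹(μ)`, firm-copy side. -/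
def TinvF (Pf : (Σ i : ι, Fin (J i)) → LinearOrder (Option W))
    (muW : W → Option ι) (muF : ι → Finset W) (f : Σ i : ι, Fin (J i)) :
    Option W :=
  if h : ∃ w : W, TinvW Pf muW muF w = some f then some h.choose else none

end Defs

/-- if `λ` is a stable* matching of the associated one-to-one
market, then `T(λ) = μ` with `μ(φ_i) = ⋃_{j ∈ J_i} {λ(f_{ij})}` is a
well-defined many-to-one matching: in particular no worker is assigned to
copies of two distinct firms. -/
theorem T_well_defined
    {ι W : Type*} [Fintype ι] [DecidableEq ι] [Fintype W] [DecidableEq W]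
    {J : ι → ℕ}
    (Pf : (Σ i : ι, Fin (J i)) → LinearOrder (Option W))
    (Pw : W → LinearOrder (Option (Σ i : ι, Fin (J i))))
    (lamF : (Σ i : ι, Fin (J i)) → Option W)
    (lamW : W → Option (Σ i : ι, Fin (J i)))
    (hmatch : OneIsMatching lamF lamW)
    (hstable : StableStar Pf Pw lamF lamW) :
    ManyIsMatching (Tworker lamW) (Tfirm lamF) ∧
    ∀ (w : W) (i i' : ι),
      w ∈ Tfirm lamF i → w ∈ Tfirm lamF i' → i = i' := by
  have key : ∀ (i : ι) (w : W), w ∈ Tfirm lamF i ↔ Tworker lamW w = some i := by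
    intro i w
    simp only [Tfirm, Finset.mem_filter, Finset.mem_univ, true_and, Tworker]
    constructor
    · rintro ⟨j, hj⟩
      rw [(hmatch ⟨i, j⟩ w).1 hj]
      rfl
    · intro h
      cases hw : lamW w with
      | none => rw [hw] at h; simp at h
      | some f =>
        rw [hw] at h
        simp only [Option.map_some] at h
        obtain ⟨i', j⟩ := f
        have hii : i' = i := Option.some_injective _ h
        subst hii
        exact ⟨j, (hmatch ⟨i', j⟩ w).2 hw⟩
  refine ⟨key, fun w i i' hi hi' => ?_⟩
  have h1 := (key i w).1 hi
  have h2 := (key i' w).1 hi'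
  rw [h1] at h2
  exact Option.some_injective _ h2

end
end

section
/- If λ is a stable* matching and firm-copy f_{ij} is matched to worker w, then w is in the choice set of firm φ_i from the set of all workers matched to copies of φ_i: w ∈ C_{φ_i}(⋃_{j'∈J_i}{λ(f_{ij'})}). -/
open Classical

noncomputable section

theorem mem_Tfirm {ι W : Type*} [Fintype W] [DecidableEq W] {J : ι → ℕ}
    {lamF : (Σ i : ι, Fin (J i)) → Option W} {i : ι} {w : W} :
    w ∈ Tfirm lamF i ↔ ∃ j, lamF ⟨i, j⟩ = some w := by
  simp [Tfirm]

theorem StableStar.le_of_lamF_eq_some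
    {ι W : Type*} {J : ι → ℕ}
    {Pf : (Σ i : ι, Fin (J i)) → LinearOrder (Option W)}
    {Pw : W → LinearOrder (Option (Σ i : ι, Fin (J i)))}
    {lamF : (Σ i : ι, Fin (J i)) → Option W}
    {lamW : W → Option (Σ i : ι, Fin (J i))}
    (hstable : StableStar Pf Pw lamF lamW) {i : ι} {j : Fin (J i)} {w : W}
    (hw : lamF ⟨i, j⟩ = some w) (j' : Fin (J i)) :
    (Pf ⟨i, j⟩).le (lamF ⟨i, j'⟩) (some w) := by
  let := Pf ⟨i, j⟩
  have no_envy := (not_or.mp (hstable.2.1 ⟨i, j⟩)).2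
  rw [← hw]
  exact not_lt.mp fun envy => no_envy ⟨by simp [hw], j', envy⟩

theorem matched_worker_chosen_general
    {ι W : Type*} [Fintype W] [DecidableEq W]
    {J : ι → ℕ}
    (C : ι → Finset W → Finset W)
    (Pf : (Σ i : ι, Fin (J i)) → LinearOrder (Option W))
    (Pw : W → LinearOrder (Option (Σ i : ι, Fin (J i))))
    (hAM : AMDecomposition C Pf)
    (lamF : (Σ i : ι, Fin (J i)) → Option W)
    (lamW : W → Option (Σ i : ι, Fin (J i)))
    (hstable : StableStar Pf Pw lamF lamW) :
    ∀ (i : ι) (j : Fin (J i)) (w : W),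
      lamF ⟨i, j⟩ = some w → w ∈ C i (Tfirm lamF i) := by
  intro i j w hw
  refine (hAM i _ w).mpr ⟨mem_Tfirm.mpr ⟨j, hw⟩, j, fun x hx => ?_⟩
  obtain ⟨j', hj'⟩ := mem_Tfirm.mp hx
  simpa only [hj'] using hstable.le_of_lamF_eq_some hw j'

/-- if `λ` is a stable* matching and firm-copy `f_{ij}` is
matched to worker `w`, then `w` is chosen by firm `φ_i` from the set of all
workers matched to copies of `φ_i`:
`w ∈ C_{φ_i}(⋃_{j' ∈ J_i} {λ(f_{ij'})})`. -/
theorem matched_worker_chosen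
    {ι W : Type*} [Fintype ι] [DecidableEq ι] [Fintype W] [DecidableEq W]
    {J : ι → ℕ}
    (C : ι → Finset W → Finset W)
    (Pf : (Σ i : ι, Fin (J i)) → LinearOrder (Option W))
    (Pw : W → LinearOrder (Option (Σ i : ι, Fin (J i))))
    (hAM : AMDecomposition C Pf)
    (lamF : (Σ i : ι, Fin (J i)) → Option W)
    (lamW : W → Option (Σ i : ι, Fin (J i)))
    (hmatch : OneIsMatching lamF lamW)
    (hstable : StableStar Pf Pw lamF lamW) :
    ∀ (i : ι) (j : Fin (J i)) (w : W),
      lamF ⟨i, j⟩ = some w → w ∈ C i (Tfirm lamF i) :=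
  matched_worker_chosen_general C Pf Pw hAM lamF lamW hstable

end
end
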